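/- arXiv:1706.09921 — 3 statements merged into one kernel-verified Lean document; each statement's English description precedes it below -/
import Mathlib

section
/- Let d and m be positive integers, let D be a d×m rational Dyck matrix, and let P be the rational Dyck positroid induced by D. Then P is connected in the following sense: for all b, b′ ∈ {1,…,d+m} with b ≠ b′, there exists a basis B of P with b ∈ B and b′ ∉ B such that (B \ {b}) ∪ {b′} is also a basis of P. -/
/-!
The matrix `φ(D) = [I | M]` has an identity block, and the Dyck condition `m z_j ≤ d (j - 1)`
forces `z_1 = 0` and `z_j < d`, so the first column and the top row of `M` have no zero entry.
This alone gives connectivity: for `b ≠ b'` one finds a common `T` such that `T ∪ {b}` and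
`T ∪ {b'}` are both bases, with `T` the identity columns outside one or two rows, possibly
together with the first column of `M`. Independence is checked one column at a time, by exhibiting
a linear functional that kills the columns already chosen but not the new one.
-/

/-- `D` is a `d × m` rational Dyck matrix: its zero entries (anchored in the
upper-right corner) are cut out by a (vertically reflected) rational Dyck path
of type `(m,d)`; `z j` is the number of north steps preceding the `(j+1)`-st
east step. -/
def IsRDM (d m : ℕ) (D : Matrix (Fin d) (Fin m) ℝ) : Prop :=
  ∃ z : Fin m → ℕ, Monotone z ∧ (∀ j, z j ≤ d) ∧
    (∀ j : Fin m, m * z j ≤ d * (j : ℕ)) ∧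
    (∀ i j, D i j = if (i : ℕ) + 1 ≤ z j then 0 else 1)

/-- The map `φ_{d,m}`: the first `d` columns form the identity matrix and the
entry in row `i`, column `d + j` is `(-1)^(d-i) * D (d+1-i) j` (1-indexed). -/
def phiMat {d m : ℕ} (D : Matrix (Fin d) (Fin m) ℝ) :
    Matrix (Fin d) (Fin (d + m)) ℝ := fun i c =>
  if _ : (c : ℕ) < d then (if (c : ℕ) = (i : ℕ) then (1 : ℝ) else 0)
  else (-1 : ℝ) ^ (d - 1 - (i : ℕ)) *
    D ⟨d - 1 - (i : ℕ), by have := i.isLt; omega⟩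
      ⟨(c : ℕ) - d, by have := c.isLt; omega⟩

/-- `B` is a basis of the matroid represented by the `d × n` matrix `A`. -/
def IsBasisOf {d n : ℕ} (A : Matrix (Fin d) (Fin n) ℝ) (B : Finset (Fin n)) : Prop :=
  B.card = d ∧ LinearIndependent ℝ (fun b : B => (A.transpose b.1))

open Classical in
/-- The weight `ω_A j`: the largest (1-indexed) row index with nonzero entry
in column `j` (and `0` if the column is zero). -/
noncomputable def wt {d n : ℕ} (A : Matrix (Fin d) (Fin n) ℝ) (j : Fin n) : ℕ :=
  (Finset.univ.filter fun i : Fin d => A i j ≠ 0).sup fun i => (i : ℕ) + 1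

/-- `c` is a principal index of `A`: (1-indexed) `d < c+1 ≤ d+m` and the
column `c` differs from the previous column. -/
def IsPrincipal {d m : ℕ} (A : Matrix (Fin d) (Fin (d + m)) ℝ) (c : Fin (d + m)) : Prop :=
  d ≤ (c : ℕ) ∧ ∃ i : Fin d, A i c ≠ A i ⟨(c : ℕ) - 1, by have := c.isLt; omega⟩

/-- Position of `x` in the cyclically shifted order `≤_b`. -/
def shiftVal {n : ℕ} (b x : Fin n) : ℕ := ((x - b : Fin n) : ℕ)

/-- The list of positions (w.r.t. `≤_b`) of the elements of `B`, sorted increasingly. -/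
def shiftedSorted {n : ℕ} (b : Fin n) (B : Finset (Fin n)) : List ℕ :=
  (B.val.map (shiftVal b)).sort (· ≤ ·)

/-- Lexicographic comparison of lists of naturals. -/
def lexLE (l₁ l₂ : List ℕ) : Prop := l₁ = l₂ ∨ List.Lex (· < ·) l₁ l₂

/-- `I` is the entry at base point `b` of the Grassmann necklace of the matroid
represented by `A`: it is the lexicographically `≤_b`-minimal basis. -/
def IsGNEntry {d n : ℕ} (A : Matrix (Fin d) (Fin n) ℝ) (b : Fin n) (I : Finset (Fin n)) : Prop :=
  IsBasisOf A I ∧ ∀ B, IsBasisOf A B → lexLE (shiftedSorted b I) (shiftedSorted b B)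

/-- Cyclic successor on `Fin n`. -/
def finSucc {n : ℕ} (b : Fin n) : Fin n :=
  ⟨((b : ℕ) + 1) % n, Nat.mod_lt _ (by have := b.isLt; omega)⟩

open Finset Matrix

section DualWitness

variable {K V ι : Type*} [Field K] [AddCommGroup V] [Module K V] {v : ι → V} {s : Set ι} {y : ι}

theorem LinearIndepOn.insert_of_dual (hs : LinearIndepOn K v s) (f : Module.Dual K V)
    (hf : ∀ x ∈ s, f (v x) = 0) (hy : f (v y) ≠ 0) : LinearIndepOn K v (insert y s) := by
  refine hs.insert fun hmem => hy ?_
  have hle : Submodule.span K (v '' s) ≤ LinearMap.ker f :=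
    Submodule.span_le.mpr <| by rintro _ ⟨x, hx, rfl⟩; exact hf x hx
  exact hle hmem

end DualWitness

section Exchange

variable {d n : ℕ}

def Exchangeable (A : Matrix (Fin d) (Fin n) ℝ) (b b' : Fin n) : Prop :=
  ∃ B : Finset (Fin n), IsBasisOf A B ∧ b ∈ B ∧ b' ∉ B ∧ IsBasisOf A (insert b' (B.erase b))

variable {A : Matrix (Fin d) (Fin n) ℝ}

theorem Exchangeable.symm {b b' : Fin n} (h : Exchangeable A b b') : Exchangeable A b' b := by
  obtain ⟨B, hB, hb, hb', hB'⟩ := h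
  have hne : b ≠ b' := by rintro rfl; exact hb' hb
  refine ⟨insert b' (B.erase b), hB', mem_insert_self _ _, by simp [hne], ?_⟩
  rwa [erase_insert (by simp [hb']), insert_erase hb]

theorem exchangeable_of_isBasisOf_insert {T : Finset (Fin n)} {b b' : Fin n} (hne : b ≠ b')
    (hb : b ∉ T) (hb' : b' ∉ T) (h : IsBasisOf A (insert b T)) (h' : IsBasisOf A (insert b' T)) :
    Exchangeable A b b' :=
  ⟨insert b T, h, mem_insert_self _ _, by simp [hne.symm, hb'], by rwa [erase_insert hb]⟩

theorem isBasisOf_insert_of_dual {T : Finset (Fin n)} {c : Fin n}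
    (hT : LinearIndepOn ℝ Aᵀ (T : Set (Fin n))) (hcard : #T + 1 = d)
    (f : Module.Dual ℝ (Fin d → ℝ)) (hf : ∀ x ∈ T, f (Aᵀ x) = 0) (hc : f (Aᵀ c) ≠ 0) :
    IsBasisOf A (insert c T) := by
  have hcT : c ∉ T := fun h => hc (hf c h)
  refine ⟨by rw [card_insert_of_notMem hcT, hcard], ?_⟩
  have h := hT.insert_of_dual f hf hc
  rw [← coe_insert] at h
  exact h

end Exchange

section IdentityPrefix

variable {d m : ℕ} {A : Matrix (Fin d) (Fin (d + m)) ℝ}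

def idCols (m : ℕ) (R : Finset (Fin d)) : Finset (Fin (d + m)) :=
  Rᶜ.map (Fin.castAddEmb m)

@[simp]
theorem Fin.castAdd_ne_natAdd (i : Fin d) (j : Fin m) : Fin.castAdd m i ≠ Fin.natAdd d j := by
  rw [Ne, Fin.ext_iff, Fin.val_castAdd, Fin.val_natAdd]
  omega

@[simp]
theorem castAdd_mem_idCols {R : Finset (Fin d)} {i : Fin d} :
    Fin.castAdd m i ∈ idCols m R ↔ i ∉ R := by
  simp [idCols]

@[simp]
theorem natAdd_notMem_idCols (R : Finset (Fin d)) (j : Fin m) :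
    Fin.natAdd d j ∉ idCols m R := by
  simp [idCols]

theorem card_idCols (R : Finset (Fin d)) : #(idCols m R) = d - #R := by
  simp [idCols, card_compl]

theorem apply_castAdd_of_submatrix_eq_one (hA : A.submatrix id (Fin.castAdd m) = 1)
    (i j : Fin d) : A i (Fin.castAdd m j) = if i = j then 1 else 0 := by
  simpa [Matrix.one_apply] using congrFun (congrFun hA i) j

theorem apply_eq_zero_of_mem_idCols (hA : A.submatrix id (Fin.castAdd m) = 1)
    {R : Finset (Fin d)} {r : Fin d} (hr : r ∈ R) {x : Fin (d + m)} (hx : x ∈ idCols m R) :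
    A r x = 0 := by
  obtain ⟨i, hi, rfl⟩ := mem_map.mp hx
  rw [Fin.castAddEmb_apply, apply_castAdd_of_submatrix_eq_one hA, if_neg]
  rintro rfl
  exact mem_compl.mp hi hr

theorem linearIndepOn_idCols (hA : A.submatrix id (Fin.castAdd m) = 1) (R : Finset (Fin d)) :
    LinearIndepOn ℝ Aᵀ (idCols m R : Set (Fin (d + m))) := by
  have hcols : Aᵀ ∘ Fin.castAddEmb m = Pi.basisFun ℝ (Fin d) := by
    ext i k
    change A k (Fin.castAdd m i) = _
    simp [apply_castAdd_of_submatrix_eq_one hA, Pi.single_apply]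
  rw [idCols, coe_map]
  refine LinearIndepOn.image_of_comp _ _ ?_
  rw [hcols]
  exact (Pi.basisFun ℝ (Fin d)).linearIndependent.linearIndepOn _

theorem isBasisOf_insert_idCols_singleton (hA : A.submatrix id (Fin.castAdd m) = 1)
    {r : Fin d} {c : Fin (d + m)} (hc : A r c ≠ 0) :
    IsBasisOf A (insert c (idCols m {r})) := by
  refine isBasisOf_insert_of_dual (linearIndepOn_idCols hA _) ?_ (LinearMap.proj r)
    (fun x hx => apply_eq_zero_of_mem_idCols hA (mem_singleton_self r) hx) hc
  rw [card_idCols, card_singleton]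
  have := r.isLt
  omega

theorem isBasisOf_insert_insert_idCols_pair (hA : A.submatrix id (Fin.castAdd m) = 1)
    {r s : Fin d} {c c' : Fin (d + m)} (hc : A r c ≠ 0)
    (hdet : A r c * A s c' - A r c' * A s c ≠ 0) :
    IsBasisOf A (insert c' (insert c (idCols m {r, s}))) := by
  have hrs : r ≠ s := by
    rintro rfl
    exact hdet (by ring)
  have hcT : c ∉ idCols m {r, s} := fun h =>
    hc (apply_eq_zero_of_mem_idCols hA (by simp) h)
  have hT : LinearIndepOn ℝ Aᵀ (insert c (idCols m {r, s}) : Finset _) := by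
    rw [coe_insert]
    exact (linearIndepOn_idCols hA _).insert_of_dual (LinearMap.proj r)
      (fun x hx => apply_eq_zero_of_mem_idCols hA (by simp) hx) hc
  refine isBasisOf_insert_of_dual hT ?_ (A s c • LinearMap.proj r - A r c • LinearMap.proj s)
    ?_ ?_
  · rw [card_insert_of_notMem hcT, card_idCols, card_pair hrs]
    have := r.isLt
    have := s.isLt
    have := Fin.val_ne_of_ne hrs
    omega
  · intro x hx
    rcases mem_insert.mp hx with rfl | hx
    · simp only [LinearMap.sub_apply, LinearMap.smul_apply, LinearMap.proj_apply,
        transpose_apply, smul_eq_mul]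
      ring
    · simp [apply_eq_zero_of_mem_idCols hA (by simp : r ∈ ({r, s} : Finset _)) hx,
        apply_eq_zero_of_mem_idCols hA (by simp : s ∈ ({r, s} : Finset _)) hx]
  · simp only [LinearMap.sub_apply, LinearMap.smul_apply, LinearMap.proj_apply,
      transpose_apply, smul_eq_mul]
    contrapose! hdet
    linarith

end IdentityPrefix

section Connected

variable {d m : ℕ} {A : Matrix (Fin d) (Fin (d + m)) ℝ}

theorem exchangeable_castAdd_castAdd (hA : A.submatrix id (Fin.castAdd m) = 1) {c₀ : Fin m}
    (hcol : ∀ i, A i (Fin.natAdd d c₀) ≠ 0) {i k : Fin d} (hik : i ≠ k) :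
    Exchangeable A (Fin.castAdd m i) (Fin.castAdd m k) := by
  have hentry := apply_castAdd_of_submatrix_eq_one hA
  refine exchangeable_of_isBasisOf_insert (T := insert (Fin.natAdd d c₀) (idCols m {i, k}))
    ((Fin.castAdd_injective d m).ne hik) (by simp) (by simp)
    (isBasisOf_insert_insert_idCols_pair hA (hcol i) ?_)
    (isBasisOf_insert_insert_idCols_pair hA (hcol i) ?_)
  · simpa [hentry, hik.symm] using hcol k
  · simpa [hentry, hik] using hcol i

theorem exchangeable_castAdd_natAdd (hA : A.submatrix id (Fin.castAdd m) = 1) {r₀ : Fin d}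
    {c₀ : Fin m} (hrow : ∀ j, A r₀ (Fin.natAdd d j) ≠ 0) (hcol : ∀ i, A i (Fin.natAdd d c₀) ≠ 0)
    (i : Fin d) (j : Fin m) : Exchangeable A (Fin.castAdd m i) (Fin.natAdd d j) := by
  have hentry := apply_castAdd_of_submatrix_eq_one hA
  by_cases hij : A i (Fin.natAdd d j) = 0
  · have hr₀i : r₀ ≠ i := by
      rintro rfl
      exact hrow j hij
    have hjc₀ : j ≠ c₀ := by
      rintro rfl
      exact hcol i hij
    refine exchangeable_of_isBasisOf_insert (T := insert (Fin.natAdd d c₀) (idCols m {r₀, i}))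
      (by simp) (by simp) (by simp [hjc₀])
      (isBasisOf_insert_insert_idCols_pair hA (hcol r₀) ?_)
      (isBasisOf_insert_insert_idCols_pair hA (hcol r₀) ?_)
    · simpa [hentry, hr₀i] using hcol r₀
    · simpa [hij] using mul_ne_zero (hrow j) (hcol i)
  · refine exchangeable_of_isBasisOf_insert (T := idCols m {i}) (by simp) (by simp) (by simp)
      (isBasisOf_insert_idCols_singleton hA (by simp [hentry]))
      (isBasisOf_insert_idCols_singleton hA hij)

theorem exchangeable_natAdd_natAdd (hA : A.submatrix id (Fin.castAdd m) = 1) {r₀ : Fin d}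
    (hrow : ∀ j, A r₀ (Fin.natAdd d j) ≠ 0) {j j' : Fin m} (hjj' : j ≠ j') :
    Exchangeable A (Fin.natAdd d j) (Fin.natAdd d j') :=
  exchangeable_of_isBasisOf_insert (T := idCols m {r₀}) ((Fin.natAdd_injective m d).ne hjj')
    (by simp) (by simp) (isBasisOf_insert_idCols_singleton hA (hrow j))
    (isBasisOf_insert_idCols_singleton hA (hrow j'))

theorem exchangeable_of_row_col_ne_zero (hA : A.submatrix id (Fin.castAdd m) = 1) {r₀ : Fin d}
    {c₀ : Fin m} (hrow : ∀ j, A r₀ (Fin.natAdd d j) ≠ 0) (hcol : ∀ i, A i (Fin.natAdd d c₀) ≠ 0)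
    {b b' : Fin (d + m)} (hne : b ≠ b') : Exchangeable A b b' := by
  cases b using Fin.addCases with
  | left i =>
    cases b' using Fin.addCases with
    | left k => exact exchangeable_castAdd_castAdd hA hcol fun h => hne (h ▸ rfl)
    | right j => exact exchangeable_castAdd_natAdd hA hrow hcol i j
  | right j =>
    cases b' using Fin.addCases with
    | left i => exact (exchangeable_castAdd_natAdd hA hrow hcol i j).symm
    | right j' => exact exchangeable_natAdd_natAdd hA hrow fun h => hne (h ▸ rfl)

end Connected

section RationalDyck

variable {d m : ℕ}

theorem phiMat_submatrix_castAdd (D : Matrix (Fin d) (Fin m) ℝ) :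
    (phiMat D).submatrix id (Fin.castAdd m) = 1 := by
  ext i j
  simp [phiMat, Matrix.one_apply, Fin.ext_iff, eq_comm]

variable {D : Matrix (Fin d) (Fin m) ℝ}

theorem phiMat_natAdd_ne_zero {z : Fin m → ℕ}
    (hz : ∀ i j, D i j = if (i : ℕ) + 1 ≤ z j then 0 else 1) {i : Fin d} {j : Fin m}
    (hij : (i : ℕ) + z j < d) : phiMat D i (Fin.natAdd d j) ≠ 0 := by
  rw [phiMat, dif_neg (by simp), hz, if_neg (by simp; omega), mul_one]
  exact pow_ne_zero _ (by norm_num)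

theorem IsRDM.phiMat_zero_natAdd_ne_zero (hD : IsRDM d m D) (hd : 0 < d) (j : Fin m) :
    phiMat D ⟨0, hd⟩ (Fin.natAdd d j) ≠ 0 := by
  obtain ⟨z, -, -, hslope, hz⟩ := hD
  refine phiMat_natAdd_ne_zero hz ?_
  have : m * z j < m * d := calc
    m * z j ≤ d * j := hslope j
    _ < d * m := Nat.mul_lt_mul_of_pos_left j.isLt hd
    _ = m * d := Nat.mul_comm d m
  simpa using Nat.lt_of_mul_lt_mul_left this

theorem IsRDM.phiMat_natAdd_zero_ne_zero (hD : IsRDM d m D) (hm : 0 < m) (i : Fin d) :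
    phiMat D i (Fin.natAdd d ⟨0, hm⟩) ≠ 0 := by
  obtain ⟨z, -, -, hslope, hz⟩ := hD
  refine phiMat_natAdd_ne_zero hz ?_
  have : m * z ⟨0, hm⟩ ≤ 0 := by simpa using hslope ⟨0, hm⟩
  have : z ⟨0, hm⟩ = 0 := by simpa [hm.ne'] using this
  simp [this]

end RationalDyck

/-- Proposition 2.10: every rational Dyck positroid is connected: for any two
distinct ground-set elements `b ≠ b'` there is a basis `B` containing `b` and
not `b'` such that `(B \ {b}) ∪ {b'}` is again a basis. -/
theorem rationalDyckPositroid_connected (d m : ℕ) (hd : 0 < d) (hm : 0 < m)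
    (D : Matrix (Fin d) (Fin m) ℝ) (hD : IsRDM d m D) :
    ∀ b b' : Fin (d + m), b ≠ b' →
      ∃ B : Finset (Fin (d + m)), IsBasisOf (phiMat D) B ∧ b ∈ B ∧ b' ∉ B ∧
        IsBasisOf (phiMat D) (insert b' (B.erase b)) := fun _ _ hne =>
  exchangeable_of_row_col_ne_zero (phiMat_submatrix_castAdd D)
    (hD.phiMat_zero_natAdd_ne_zero hd) (hD.phiMat_natAdd_zero_ne_zero hm) hne
end

section
/- Let d and m be positive integers. If D and D′ are d×m rational Dyck matrices such that φ_{d,m}(D) and φ_{d,m}(D′) represent the same matroid on {1,…,d+m} (that is, they have the same collection of bases), then D = D′. Consequently, the assignment sending a d×m rational Dyck matrix D to the matroid represented by φ_{d,m}(D) is a bijection from the set of d×m rational Dyck matrices (equivalently, rational Dyck paths of type (m,d)) onto the set of rank-d rational Dyck positroids on {1,…,d+m}. -/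
lemma basis_iff {d m : ℕ} (A : Matrix (Fin d) (Fin (d + m)) ℝ)
    (hA : ∀ (i : Fin d) (j : Fin (d + m)), (j : ℕ) < d →
      A i j = if (j : ℕ) = (i : ℕ) then 1 else 0)
    (k : Fin d) (c : Fin (d + m)) (hc : d ≤ (c : ℕ)) :
    IsBasisOf A (insert c ((Finset.univ.erase k).image (Fin.castAdd m))) ↔ A k c ≠ 0 := by
  classical
  set B : Finset (Fin (d + m)) := insert c ((Finset.univ.erase k).image (Fin.castAdd m)) with hB
  have hcastinj : Function.Injective (Fin.castAdd m : Fin d → Fin (d + m)) := by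
    intro a b hab
    exact Fin.ext (by simpa using congrArg Fin.val hab)
  have hcnot : c ∉ (Finset.univ.erase k).image (Fin.castAdd m) := by
    intro hmem
    obtain ⟨x, -, hx⟩ := Finset.mem_image.mp hmem
    have := congrArg Fin.val hx
    simp at this
    omega
  have hcB : B.card = d := by
    rw [hB, Finset.card_insert_of_notMem hcnot,
      Finset.card_image_of_injective _ hcastinj,
      Finset.card_erase_of_mem (Finset.mem_univ k), Finset.card_univ, Fintype.card_fin]
    have := k.pos
    omega
  -- the reindexed family
  set eFun : Fin d → Fin (d + m) := fun i => if i = k then c else Fin.castAdd m i with heFun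
  have hmem : ∀ i, eFun i ∈ B := by
    intro i
    by_cases h : i = k
    · simp [heFun, h, hB]
    · simp only [heFun, if_neg h]
      exact Finset.mem_insert_of_mem
        (Finset.mem_image_of_mem _ (Finset.mem_erase.mpr ⟨h, Finset.mem_univ i⟩))
  set F : Fin d → ↥B := fun i => ⟨eFun i, hmem i⟩ with hF
  have hFinj : Function.Injective F := by
    intro a b hab
    have hval : eFun a = eFun b := congrArg Subtype.val hab
    by_cases ha : a = k <;> by_cases hb : b = k
    · rw [ha, hb]
    · exfalso
      rw [heFun] at hval
      simp only [if_pos ha, if_neg hb] at hval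
      have := congrArg Fin.val hval
      simp at this
      omega
    · exfalso
      rw [heFun] at hval
      simp only [if_neg ha, if_pos hb] at hval
      have := congrArg Fin.val hval
      simp at this
      omega
    · rw [heFun] at hval
      simp only [if_neg ha, if_neg hb] at hval
      exact hcastinj hval
  have hcard : Fintype.card (Fin d) = Fintype.card ↥B := by
    rw [Fintype.card_coe, hcB, Fintype.card_fin]
  set e : Fin d ≃ ↥B := Equiv.ofBijective F
    ((Fintype.bijective_iff_injective_and_card F).mpr ⟨hFinj, hcard⟩) with he
  set v : Fin d → (Fin d → ℝ) := fun i => A.transpose (eFun i) with hv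
  have hvr : ∀ i r, v i r = if i = k then A r c else (if (i : ℕ) = (r : ℕ) then 1 else 0) := by
    intro i r
    by_cases h : i = k
    · simp [hv, heFun, h, Matrix.transpose_apply]
    · have hlt : ((Fin.castAdd m i : Fin (d + m)) : ℕ) < d := by simp [i.isLt]
      simp [hv, heFun, h, Matrix.transpose_apply, hA r _ hlt]
  have hsum : ∀ (g : Fin d → ℝ) (r : Fin d),
      ∑ i, g i * v i r = g k * A r c + (if r = k then 0 else g r) := by
    intro g r
    rw [← Finset.add_sum_erase _ _ (Finset.mem_univ k)]
    congr 1
    · simp [hvr]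
    · have hcongr : ∀ i ∈ Finset.univ.erase k, g i * v i r = if i = r then g i else 0 := by
        intro i hi
        have hik : i ≠ k := (Finset.mem_erase.mp hi).1
        simp [hvr, hik, Fin.val_eq_val, mul_ite]
      rw [Finset.sum_congr rfl hcongr, Finset.sum_ite_eq']
      by_cases hr : r = k <;> simp [hr, Finset.mem_erase]
  have hLIv : LinearIndependent ℝ v ↔ A k c ≠ 0 := by
    constructor
    · intro hLI hkc
      set g : Fin d → ℝ := fun i => if i = k then 1 else -A i c with hg
      have h0 : ∑ i, g i • v i = 0 := by
        funext r
        have : (∑ i, g i • v i) r = ∑ i, g i * v i r := by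
          simp [Finset.sum_apply, smul_eq_mul]
        rw [this, hsum]
        by_cases hr : r = k <;> simp [hg, hr, hkc]
      have := Fintype.linearIndependent_iff.mp hLI g h0 k
      simp [hg] at this
    · intro hkc
      rw [Fintype.linearIndependent_iff]
      intro g hg
      have hco : ∀ r, ∑ i, g i * v i r = 0 := by
        intro r
        have := congrFun hg r
        simpa [Finset.sum_apply, smul_eq_mul] using this
      have hk : g k = 0 := by
        have := hco k
        rw [hsum] at this
        simp at this
        rcases this with h | h
        · exact h
        · exact absurd h hkc
      intro i
      by_cases hik : i = k
      · rw [hik]; exact hk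
      · have := hco i
        rw [hsum, hk] at this
        simpa [hik] using this
  have hcomp : (fun b : ↥B => A.transpose b.1) ∘ e = v := rfl
  constructor
  · rintro ⟨-, hLI⟩
    exact hLIv.mp (hcomp ▸ (linearIndependent_equiv e).mpr hLI)
  · intro hkc
    exact ⟨hcB, (linearIndependent_equiv e).mp (hcomp ▸ hLIv.mpr hkc)⟩
lemma rdm_inj {d m : ℕ} (D D' : Matrix (Fin d) (Fin m) ℝ)
    (hD : IsRDM d m D) (hD' : IsRDM d m D')
    (h : ∀ B : Finset (Fin (d + m)), IsBasisOf (phiMat D) B ↔ IsBasisOf (phiMat D') B) :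
    D = D' := by
  classical
  have hval : ∀ (E : Matrix (Fin d) (Fin m) ℝ), IsRDM d m E →
      ∀ i j, E i j = 0 ∨ E i j = 1 := by
    rintro E ⟨z, -, -, -, hz⟩ i j
    rw [hz i j]
    by_cases hc : (i : ℕ) + 1 ≤ z j <;> simp [hc]
  funext i j
  have hdpos : 0 < d := i.pos
  set k : Fin d := ⟨d - 1 - (i : ℕ), by have := i.isLt; omega⟩ with hk
  set c : Fin (d + m) := ⟨d + (j : ℕ), by have := j.isLt; omega⟩ with hc
  have key : ∀ E : Matrix (Fin d) (Fin m) ℝ, phiMat E k c = (-1 : ℝ) ^ (i : ℕ) * E i j := by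
    intro E
    have hnlt : ¬ ((c : ℕ) < d) := by simp [hc]
    rw [phiMat, dif_neg hnlt]
    have e1 : d - 1 - (k : ℕ) = (i : ℕ) := by
      have := i.isLt; simp only [hk]; omega
    have e2 : (c : ℕ) - d = (j : ℕ) := by simp [hc]
    simp only [e1, e2]
  have hA : ∀ (E : Matrix (Fin d) (Fin m) ℝ) (r : Fin d) (jc : Fin (d + m)),
      (jc : ℕ) < d → phiMat E r jc = if (jc : ℕ) = (r : ℕ) then 1 else 0 := by
    intro E r jc hlt
    rw [phiMat, dif_pos hlt]
  have hcd : d ≤ (c : ℕ) := by simp [hc]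
  have hiff : D i j ≠ 0 ↔ D' i j ≠ 0 := by
    have h1 := basis_iff (phiMat D) (hA D) k c hcd
    have h2 := basis_iff (phiMat D') (hA D') k c hcd
    have h3 := h (insert c ((Finset.univ.erase k).image (Fin.castAdd m)))
    have hpow : ((-1 : ℝ) ^ (i : ℕ)) ≠ 0 := by
      apply pow_ne_zero; norm_num
    constructor
    · intro hne
      have : phiMat D k c ≠ 0 := by rw [key D]; exact mul_ne_zero hpow hne
      have := h2.mp (h3.mp (h1.mpr this))
      rw [key D'] at this
      exact fun h0 => this (by rw [h0, mul_zero])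
    · intro hne
      have : phiMat D' k c ≠ 0 := by rw [key D']; exact mul_ne_zero hpow hne
      have := h1.mp (h3.mpr (h2.mpr this))
      rw [key D] at this
      exact fun h0 => this (by rw [h0, mul_zero])
  rcases hval D hD i j with h0 | h1 <;> rcases hval D' hD' i j with h0' | h1'
  · rw [h0, h0']
  · exact absurd h0 (hiff.mpr (by rw [h1']; norm_num))
  · exact absurd h0' (hiff.mp (by rw [h1]; norm_num))
  · rw [h1, h1']

/-- Distinct rational Dyck matrices induce distinct positroids; consequently
`D ↦ {bases of the matroid represented by φ D}` is a bijection from the set of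
`d × m` rational Dyck matrices onto the set of rank-`d` rational Dyck
positroids on `{1, …, d+m}` (identified with their collections of bases). -/
theorem rationalDyckMatrix_to_positroid_bijective (d m : ℕ) (hd : 0 < d) (hm : 0 < m) :
    (∀ D D' : Matrix (Fin d) (Fin m) ℝ, IsRDM d m D → IsRDM d m D' →
      (∀ B : Finset (Fin (d + m)), IsBasisOf (phiMat D) B ↔ IsBasisOf (phiMat D') B) →
      D = D') ∧
    Set.BijOn (fun D : Matrix (Fin d) (Fin m) ℝ =>
        {B : Finset (Fin (d + m)) | IsBasisOf (phiMat D) B})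
      {D | IsRDM d m D}
      {𝓑 | ∃ D : Matrix (Fin d) (Fin m) ℝ, IsRDM d m D ∧
        𝓑 = {B : Finset (Fin (d + m)) | IsBasisOf (phiMat D) B}} := by
  refine ⟨fun D D' hD hD' h => rdm_inj D D' hD hD' h, ?_, ?_, ?_⟩
  · intro D hD
    exact ⟨D, hD, rfl⟩
  · intro D hD D' hD' hEq
    refine rdm_inj D D' hD hD' fun B => ?_
    have := Set.ext_iff.mp hEq B
    simpa using this
  · rintro 𝓑 ⟨D, hD, rfl⟩
    exact ⟨D, hD, rfl⟩
end

section
/- Let d and m be positive integers with gcd(d,m) = 1. Then the number of distinct rank-d rational Dyck positroids on the ground set {1,…,d+m}, i.e., the number of distinct matroids represented by φ_{d,m}(D) as D ranges over all d×m rational Dyck matrices, equals (1/(d+m))·C(d+m, d), where C(d+m, d) is the binomial coefficient. -/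
namespace RDPAux

open Finset

variable {d m : ℕ}

/-- number of elements of `A` with value `< p` -/
def cnt (A : Finset (Fin (d + m))) (p : ℕ) : ℕ :=
  (A.filter fun x : Fin (d + m) => (x : ℕ) < p).card

def fA (d m : ℕ) (A : Finset (Fin (d + m))) (p : ℕ) : ℤ :=
  (d + m) * cnt A p - d * p

lemma cnt_zero (A : Finset (Fin (d + m))) : cnt A 0 = 0 := by simp [cnt]

lemma cnt_top (A : Finset (Fin (d + m))) : cnt A (d + m) = A.card := by
  unfold cnt; congr 1
  apply filter_true_of_mem
  intro x _; exact x.isLt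

lemma cnt_mono (A : Finset (Fin (d + m))) {p q : ℕ} (h : p ≤ q) : cnt A p ≤ cnt A q := by
  apply card_le_card
  intro x hx
  simp only [mem_filter] at hx ⊢
  exact ⟨hx.1, by omega⟩

lemma cnt_succ (A : Finset (Fin (d + m))) {p : ℕ} (hp : p < d + m) :
    cnt A (p + 1) = cnt A p + (if (⟨p, hp⟩ : Fin (d + m)) ∈ A then 1 else 0) := by
  classical
  unfold cnt
  have h1 : (A.filter fun x : Fin (d + m) => (x : ℕ) < p + 1)
      = (A.filter fun x : Fin (d + m) => (x : ℕ) < p) ∪ (A.filter fun x : Fin (d + m) => x = ⟨p, hp⟩) := by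
    ext x
    simp only [mem_filter, mem_union]
    constructor
    · rintro ⟨hA, hx⟩
      rcases Nat.lt_succ_iff_lt_or_eq.mp hx with h | h
      · exact Or.inl ⟨hA, h⟩
      · exact Or.inr ⟨hA, Fin.ext h⟩
    · rintro (⟨hA, hx⟩ | ⟨hA, hx⟩)
      · exact ⟨hA, by omega⟩
      · subst hx; exact ⟨hA, by simp⟩
  rw [h1, card_union_of_disjoint, filter_eq']
  · split <;> simp
  · rw [disjoint_left]
    intro a ha hb
    simp only [mem_filter] at ha hb
    have := ha.2
    rw [hb.2] at this
    simp at this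
lemma fA_zero (A : Finset (Fin (d + m))) : fA d m A 0 = 0 := by simp [fA, cnt_zero]

lemma fA_top {A : Finset (Fin (d + m))} (hA : A.card = d) : fA d m A (d + m) = 0 := by
  simp [fA, cnt_top, hA]; ring

lemma fA_succ (A : Finset (Fin (d + m))) {p : ℕ} (hp : p < d + m) :
    fA d m A (p + 1) = fA d m A p + (if (⟨p, hp⟩ : Fin (d + m)) ∈ A then ((d : ℤ) + m) else 0) - d := by
  unfold fA
  rw [cnt_succ A hp]
  split <;> push_cast <;> ring

section Shift
variable [NeZero (d + m)]

def sh (t : Fin (d + m)) (A : Finset (Fin (d + m))) : Finset (Fin (d + m)) :=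
  A.image (· + t)

lemma mem_sh {t : Fin (d + m)} {A : Finset (Fin (d + m))} {x : Fin (d + m)} :
    x ∈ sh t A ↔ x - t ∈ A := by
  constructor
  · intro h
    obtain ⟨a, ha, rfl⟩ := mem_image.mp h
    simpa using ha
  · intro h
    exact mem_image.mpr ⟨x - t, h, by simp⟩

lemma sh_sh (t t' : Fin (d + m)) (A : Finset (Fin (d + m))) :
    sh t' (sh t A) = sh (t + t') A := by
  unfold sh
  rw [image_image]
  congr 1
  funext a
  simp [Function.comp, add_assoc]

lemma sh_zero (A : Finset (Fin (d + m))) : sh 0 A = A := by simp [sh]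

lemma card_sh (t : Fin (d + m)) (A : Finset (Fin (d + m))) : (sh t A).card = A.card :=
  card_image_of_injective _ (add_left_injective t)

lemma fA_sh {A : Finset (Fin (d + m))} (hA : A.card = d) (t : Fin (d + m)) :
    ∀ p, p ≤ d + m →
      fA d m (sh t A) p
        = fA d m A ((p + (d + m - (t : ℕ)) % (d + m)) % (d + m))
          - fA d m A ((d + m - (t : ℕ)) % (d + m)) := by
  have hn : 0 < d + m := t.pos
  set s := (d + m - (t : ℕ)) % (d + m) with hs
  have hslt : s < d + m := Nat.mod_lt _ hn
  intro p
  induction p with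
  | zero =>
    intro _
    rw [fA_zero, Nat.zero_add, Nat.mod_eq_of_lt hslt]
    ring
  | succ p ih =>
    intro hp1
    have hp : p < d + m := by omega
    have hq : (p + s) % (d + m) < d + m := Nat.mod_lt _ hn
    have hmemval : ((⟨p, hp⟩ : Fin (d + m)) - t) = (⟨(p + s) % (d + m), hq⟩ : Fin (d + m)) := by
      rw [Fin.sub_def]
      apply Fin.ext
      show (d + m - ↑t + p) % (d + m) = (p + s) % (d + m)
      conv_rhs => rw [Nat.add_comm p s, hs, Nat.mod_add_mod]
    have hmem : ((⟨p, hp⟩ : Fin (d + m)) ∈ sh t A)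
        ↔ ((⟨(p + s) % (d + m), hq⟩ : Fin (d + m)) ∈ A) := by
      rw [mem_sh, hmemval]
    have key : fA d m A ((p + 1 + s) % (d + m))
        = fA d m A ((p + s) % (d + m))
          + (if (⟨(p + s) % (d + m), hq⟩ : Fin (d + m)) ∈ A then ((d : ℤ) + m) else 0) - d := by
      by_cases hcase : (p + s) % (d + m) = d + m - 1
      · have h1 : (p + 1 + s) % (d + m) = 0 := by
          rw [show p + 1 + s = p + s + 1 by ring, ← Nat.mod_add_mod, hcase,
            show d + m - 1 + 1 = d + m by omega, Nat.mod_self]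
        rw [h1, fA_zero]
        have h2 := fA_succ (d := d) (m := m) A (p := d + m - 1) (by omega)
        rw [show d + m - 1 + 1 = d + m by omega, fA_top hA] at h2
        have : (⟨d + m - 1, by omega⟩ : Fin (d + m)) = ⟨(p + s) % (d + m), hq⟩ := by
          apply Fin.ext; simp [hcase]
        rw [this] at h2
        rw [← hcase] at h2
        linarith [h2]
      · have h1 : (p + 1 + s) % (d + m) = (p + s) % (d + m) + 1 := by
          rw [show p + 1 + s = p + s + 1 by ring, ← Nat.mod_add_mod,
            Nat.mod_eq_of_lt (by omega)]
        rw [h1, fA_succ A hq]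
    rw [fA_succ (sh t A) hp, ih (by omega), key]
    by_cases hx : (⟨(p + s) % (d + m), hq⟩ : Fin (d + m)) ∈ A
    · rw [if_pos hx, if_pos (hmem.mpr hx)]; ring
    · rw [if_neg hx, if_neg (fun hc => hx (hmem.mp hc))]; ring

end Shift
def Dy (d m : ℕ) : Finset (Finset (Fin (d + m))) :=
  (Finset.powersetCard d (univ : Finset (Fin (d + m)))).filter
    (fun A => ∀ p, p < d + m → 0 < p → fA d m A p < 0)

lemma mem_Dy {A : Finset (Fin (d + m))} :
    A ∈ Dy d m ↔ A.card = d ∧ ∀ p, p < d + m → 0 < p → fA d m A p < 0 := by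
  rw [Dy, mem_filter, mem_powersetCard_univ]

lemma fA_le_imp (hgcd : Nat.Coprime (d + m) d) (A : Finset (Fin (d + m))) {p q : ℕ}
    (hp : p < d + m) (hq : q < d + m) (hpq : p ≤ q) (h : fA d m A p = fA d m A q) : p = q := by
  have hc : cnt A p ≤ cnt A q := cnt_mono A hpq
  have h2 : (d + m) * (cnt A q - cnt A p) = d * (q - p) := by
    have h3 : ((d : ℤ) + m) * (cnt A p : ℤ) - d * p = ((d : ℤ) + m) * cnt A q - d * q := by
      unfold fA at h; push_cast at h; linarith
    zify [hc, hpq]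
    push_cast
    linear_combination (-1 : ℤ) * h3
  have hdvd : (d + m) ∣ d * (q - p) := Dvd.intro _ h2
  have hdvd2 : (d + m) ∣ (q - p) := hgcd.dvd_of_dvd_mul_left hdvd
  have := Nat.eq_zero_of_dvd_of_lt hdvd2
  omega

lemma fA_inj (hgcd : Nat.Coprime (d + m) d) (A : Finset (Fin (d + m))) {p q : ℕ}
    (hp : p < d + m) (hq : q < d + m) (h : fA d m A p = fA d m A q) : p = q := by
  rcases le_total p q with hpq | hpq
  · exact fA_le_imp hgcd A hp hq hpq h
  · exact (fA_le_imp hgcd A hq hp hpq h.symm).symm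

section Shift2
variable [NeZero (d + m)]

/-- from a good shift, the base value is a strict max -/
lemma lt_of_good {A : Finset (Fin (d + m))} (hA : A.card = d) {t : Fin (d + m)}
    (h : sh t A ∈ Dy d m) {b : ℕ} (hb : b < d + m)
    (hbs : b ≠ (d + m - (t : ℕ)) % (d + m)) :
    fA d m A b < fA d m A ((d + m - (t : ℕ)) % (d + m)) := by
  have hn : 0 < d + m := t.pos
  set s := (d + m - (t : ℕ)) % (d + m) with hs
  have hslt : s < d + m := Nat.mod_lt _ hn
  set p := (b + (d + m) - s) % (d + m) with hpdef
  have hplt : p < d + m := Nat.mod_lt _ hn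
  have hcases : (p = b + (d + m) - s ∧ b + (d + m) - s < d + m)
      ∨ (p = b - s ∧ d + m ≤ b + (d + m) - s) := by
    rcases lt_or_ge (b + (d + m) - s) (d + m) with hlt | hge
    · exact Or.inl ⟨by rw [hpdef, Nat.mod_eq_of_lt hlt], hlt⟩
    · refine Or.inr ⟨?_, hge⟩
      rw [hpdef, Nat.mod_eq_sub_mod hge, Nat.mod_eq_of_lt (by omega)]
      omega
  have hppos : 0 < p := by rcases hcases with ⟨he, hb2⟩ | ⟨he, hb2⟩ <;> omega
  have hps : (p + s) % (d + m) = b := by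
    rcases hcases with ⟨he, hb2⟩ | ⟨he, hb2⟩
    · rw [he, show b + (d + m) - s + s = b + (d + m) by omega, Nat.add_mod_right,
        Nat.mod_eq_of_lt hb]
    · rw [he, show b - s + s = b by omega, Nat.mod_eq_of_lt hb]
  have hDy := (mem_Dy.mp h).2 p hplt hppos
  rw [fA_sh hA t p (le_of_lt hplt), ← hs, hps] at hDy
  linarith

lemma sval {u : ℕ} (hu : u < d + m) :
    (d + m - u) % (d + m) = if u = 0 then 0 else d + m - u := by
  split
  · subst ‹u = 0›; simp [Nat.mod_self]
  · exact Nat.mod_eq_of_lt (by omega)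

lemma good_unique {A : Finset (Fin (d + m))} (hA : A.card = d) {t t' : Fin (d + m)}
    (h : sh t A ∈ Dy d m) (h' : sh t' A ∈ Dy d m) : t = t' := by
  by_contra hne
  have hn : 0 < d + m := t.pos
  have hss : (d + m - (t : ℕ)) % (d + m) ≠ (d + m - (t' : ℕ)) % (d + m) := by
    intro he
    apply hne
    apply Fin.ext
    rw [sval t.isLt, sval t'.isLt] at he
    have h1 := t.isLt
    have h2 := t'.isLt
    split at he <;> split at he <;> omega
  have l1 := lt_of_good hA h (Nat.mod_lt _ hn) hss.symm
  have l2 := lt_of_good hA h' (Nat.mod_lt _ hn) hss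
  linarith

lemma exists_good (hgcd : Nat.Coprime (d + m) d) {A : Finset (Fin (d + m))}
    (hA : A.card = d) : ∃ t : Fin (d + m), sh t A ∈ Dy d m := by
  have hn : 0 < d + m := Fin.pos ⟨0, NeZero.pos _⟩
  obtain ⟨p0, hp0mem, hmax⟩ :=
    Finset.exists_max_image (Finset.range (d + m)) (fA d m A) ⟨0, mem_range.mpr hn⟩
  have hp0 : p0 < d + m := mem_range.mp hp0mem
  refine ⟨⟨(d + m - p0) % (d + m), Nat.mod_lt _ hn⟩, ?_⟩
  have hsp : (d + m - ((d + m - p0) % (d + m))) % (d + m) = p0 := by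
    rw [sval (u := p0) hp0]
    split
    · subst ‹p0 = 0›; simp [Nat.mod_self]
    · rw [show d + m - (d + m - p0) = p0 by omega, Nat.mod_eq_of_lt hp0]
  rw [mem_Dy]
  refine ⟨(card_sh _ _).trans hA, ?_⟩
  intro p hplt hppos
  rw [fA_sh hA _ p (le_of_lt hplt)]
  show fA d m A ((p + (d + m - ((d + m - p0) % (d + m))) % (d + m)) % (d + m))
      - fA d m A ((d + m - ((d + m - p0) % (d + m))) % (d + m)) < 0
  rw [hsp]
  have hqlt : (p + p0) % (d + m) < d + m := Nat.mod_lt _ hn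
  have hqne : (p + p0) % (d + m) ≠ p0 := by
    intro hqe
    have hmod : (d + m) ∣ (p + p0) - p0 := by
      apply (Nat.modEq_iff_dvd' (by omega)).mp
      show p0 % (d + m) = (p + p0) % (d + m)
      rw [Nat.mod_eq_of_lt hp0]
      exact hqe.symm
    rw [Nat.add_sub_cancel] at hmod
    have := Nat.le_of_dvd hppos hmod
    omega
  have h1 : fA d m A ((p + p0) % (d + m)) ≤ fA d m A p0 := hmax _ (mem_range.mpr hqlt)
  have h2 : fA d m A ((p + p0) % (d + m)) ≠ fA d m A p0 := fun he => hqne (fA_inj hgcd A hqlt hp0 he)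
  omega

lemma card_Dy (hd : 0 < d) (hm : 0 < m) (hgcd : Nat.Coprime (d + m) d) :
    (d + m) * (Dy d m).card = (d + m).choose d := by
  have hbij : ((univ : Finset (Fin (d + m))) ×ˢ Dy d m).card
      = (Finset.powersetCard d (univ : Finset (Fin (d + m)))).card := by
    apply card_bij (fun a (_ : a ∈ (univ : Finset (Fin (d + m))) ×ˢ Dy d m) => sh a.1 a.2)
    · intro a ha
      rw [mem_powersetCard_univ, card_sh]
      exact (mem_Dy.mp (mem_product.mp ha).2).1
    · intro a ha a' ha' hab
      have hA := (mem_Dy.mp (mem_product.mp ha).2).1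
      have hA' := (mem_Dy.mp (mem_product.mp ha').2).1
      have e1 : sh (-a.1) (sh a.1 a.2) = a.2 := by rw [sh_sh, add_neg_cancel, sh_zero]
      have e2 : sh (-a'.1) (sh a'.1 a'.2) = a'.2 := by rw [sh_sh, add_neg_cancel, sh_zero]
      have hcardB : (sh a.1 a.2).card = d := by rw [card_sh]; exact hA
      have g1 : sh (-a.1) (sh a.1 a.2) ∈ Dy d m := by rw [e1]; exact (mem_product.mp ha).2
      have g2 : sh (-a'.1) (sh a.1 a.2) ∈ Dy d m := by
        rw [hab, e2]; exact (mem_product.mp ha').2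
      have ht : -a.1 = -a'.1 := good_unique hcardB g1 g2
      have ht2 : a.1 = a'.1 := neg_injective ht
      have : a.2 = a'.2 := by rw [← e1, hab, ht2, e2]
      exact Prod.ext ht2 this
    · intro B hB
      have hcard : B.card = d := mem_powersetCard_univ.mp hB
      obtain ⟨t, ht⟩ := exists_good hgcd hcard
      exact ⟨(-t, sh t B), mem_product.mpr ⟨mem_univ _, ht⟩,
        by rw [sh_sh, add_neg_cancel, sh_zero]⟩
  rw [card_product, card_univ, Fintype.card_fin, card_powersetCard, card_univ,
    Fintype.card_fin] at hbij
  exact hbij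

end Shift2
lemma card_filter_lt {N p : ℕ} (hp : p ≤ N) :
    ((univ : Finset (Fin N)).filter fun x : Fin N => (x : ℕ) < p).card = p := by
  have h := card_bij
    (fun (x : Fin N) (_ : x ∈ (univ : Finset (Fin N)).filter fun x : Fin N => (x : ℕ) < p) =>
      (x : ℕ))
    (fun a ha => mem_range.mpr (mem_filter.mp ha).2)
    (fun a _ b _ hab => Fin.ext hab)
    (fun b hb => ⟨⟨b, by have := mem_range.mp hb; omega⟩,
      mem_filter.mpr ⟨mem_univ _, mem_range.mp hb⟩, rfl⟩)
  rw [h, card_range]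

lemma cnt_compl (A : Finset (Fin (d + m))) {p : ℕ} (hp : p ≤ d + m) :
    cnt Aᶜ p + cnt A p = p := by
  classical
  unfold cnt
  have hu : Aᶜ ∪ A = univ := by
    ext x; simp only [Finset.mem_union, Finset.mem_compl, mem_univ, iff_true]; exact (em (x ∈ A)).symm
  rw [← card_union_of_disjoint (disjoint_filter_filter disjoint_compl_left), ← filter_union, hu,
    card_filter_lt hp]

lemma strictMono_gap {M N : ℕ} {g : Fin M → Fin N} (hg : StrictMono g) :
    ∀ (a : ℕ) (j k : Fin M), (k : ℕ) = (j : ℕ) + a → (g j : ℕ) + a ≤ (g k : ℕ) := by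
  intro a
  induction a with
  | zero =>
    intro j k h
    have : j = k := Fin.ext (by omega)
    subst this; omega
  | succ a ih =>
    intro j k h
    have hk := k.isLt
    have hja : (j : ℕ) + a < M := by omega
    have h1 := ih j ⟨(j : ℕ) + a, hja⟩ rfl
    have h2 : (⟨(j : ℕ) + a, hja⟩ : Fin M) < k := by rw [Fin.lt_def]; simp; omega
    have h3 := hg h2
    rw [Fin.lt_def] at h3
    simp at h1 h3 ⊢
    omega

lemma cnt_image_sm {g : Fin m → Fin (d + m)} (hg : StrictMono g) (j : Fin m) :
    cnt ((univ : Finset (Fin m)).image g) ((g j : ℕ)) = (j : ℕ) := by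
  unfold cnt
  have himg : ((univ : Finset (Fin m)).image g).filter (fun x : Fin (d + m) => (x : ℕ) < (g j : ℕ))
      = ((univ : Finset (Fin m)).filter fun k : Fin m => (k : ℕ) < (j : ℕ)).image g := by
    ext x
    simp only [mem_filter, mem_image, mem_univ, true_and]
    constructor
    · rintro ⟨⟨k, rfl⟩, hlt⟩
      refine ⟨k, ?_, rfl⟩
      by_contra hge
      have : j ≤ k := by rw [Fin.le_def]; omega
      have := hg.monotone this
      rw [Fin.le_def] at this
      omega
    · rintro ⟨k, hk, rfl⟩
      refine ⟨⟨k, rfl⟩, ?_⟩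
      have : k < j := by rw [Fin.lt_def]; omega
      have := hg this
      rw [Fin.lt_def] at this
      omega
  rw [himg, card_image_of_injective _ hg.injective, card_filter_lt (by omega)]

lemma Econd_to_strict (hgcd : Nat.Coprime (d + m) d) (hm : 0 < m) {A : Finset (Fin (d + m))}
    (hA : A.card = d)
    (hE : ∀ (p : ℕ) (hp : p < d + m), (⟨p, hp⟩ : Fin (d + m)) ∉ A → (d + m) * cnt A p ≤ d * p) :
    ∀ p, p < d + m → 0 < p → fA d m A p < 0 := by
  have G : ∀ k, k ≤ d + m → (d + m) * cnt A (d + m - k) ≤ d * (d + m - k) := by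
    intro k
    induction k with
    | zero =>
      intro _
      rw [Nat.sub_zero, cnt_top, hA, Nat.mul_comm]
    | succ k ih =>
      intro hk1
      have hplt : d + m - (k + 1) < d + m := by omega
      by_cases hmem : (⟨d + m - (k + 1), hplt⟩ : Fin (d + m)) ∈ A
      · have h2 := ih (by omega)
        rw [show d + m - k = (d + m - (k + 1)) + 1 by omega, cnt_succ A hplt, if_pos hmem,
          Nat.mul_succ, Nat.mul_succ] at h2
        have hdm : d ≤ d + m := by omega
        linarith
      · exact hE _ hplt hmem
  intro p hplt hppos
  have hstrict : (d + m) * cnt A p < d * p := by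
    by_cases hmem : (⟨p, hplt⟩ : Fin (d + m)) ∈ A
    · have h2 := G (d + m - (p + 1)) (by omega)
      rw [show d + m - (d + m - (p + 1)) = p + 1 by omega, cnt_succ A hplt, if_pos hmem,
        Nat.mul_succ, Nat.mul_succ] at h2
      linarith
    · have hle := G (d + m - p) (by omega)
      rw [show d + m - (d + m - p) = p by omega] at hle
      rcases lt_or_eq_of_le hle with h | h
      · exact h
      · exfalso
        have hdvd : (d + m) ∣ d * p := Dvd.intro _ h
        have hdvd2 : (d + m) ∣ p := hgcd.dvd_of_dvd_mul_left hdvd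
        have := Nat.le_of_dvd hppos hdvd2
        omega
  unfold fA
  rw [sub_neg]
  exact_mod_cast hstrict

def Zf (d m : ℕ) : Finset (Fin m → Fin (d + 1)) :=
  univ.filter (fun z => (∀ j k : Fin m, j ≤ k → (z j : ℕ) ≤ (z k : ℕ)) ∧
    ∀ j : Fin m, m * (z j : ℕ) ≤ d * (j : ℕ))

def ez (z : Fin m → Fin (d + 1)) (j : Fin m) : Fin (d + m) :=
  ⟨(z j : ℕ) + (j : ℕ), by have h1 := (z j).isLt; have h2 := j.isLt; omega⟩

def Az (z : Fin m → Fin (d + 1)) : Finset (Fin (d + m)) :=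
  ((univ : Finset (Fin m)).image (ez z))ᶜ

lemma ez_strictMono {z : Fin m → Fin (d + 1)}
    (hmono : ∀ j k : Fin m, j ≤ k → (z j : ℕ) ≤ (z k : ℕ)) : StrictMono (ez z) := by
  intro j k h
  have h2 := hmono j k (le_of_lt h)
  rw [Fin.lt_def] at h ⊢
  show (z j : ℕ) + (j : ℕ) < (z k : ℕ) + (k : ℕ)
  omega

lemma card_Az {z : Fin m → Fin (d + 1)}
    (hmono : ∀ j k : Fin m, j ≤ k → (z j : ℕ) ≤ (z k : ℕ)) : (Az z).card = d := by
  rw [Az, card_compl, card_image_of_injective _ (ez_strictMono hmono).injective,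
    card_univ, Fintype.card_fin, Fintype.card_fin]
  omega

lemma Az_mem_Dy (hgcd : Nat.Coprime (d + m) d) (hm : 0 < m) {z : Fin m → Fin (d + 1)}
    (hz : z ∈ Zf d m) : Az z ∈ Dy d m := by
  obtain ⟨-, hmono, hcond⟩ := mem_filter.mp hz
  rw [mem_Dy]
  refine ⟨card_Az hmono, Econd_to_strict hgcd hm (card_Az hmono) ?_⟩
  intro p hp hmem
  rw [Az, Finset.mem_compl, not_not] at hmem
  obtain ⟨j, -, hj⟩ := mem_image.mp hmem
  have hjval : (z j : ℕ) + (j : ℕ) = p := congrArg Fin.val hj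
  have hcnt : cnt (Az z) p = (z j : ℕ) := by
    have h1 := cnt_compl ((univ : Finset (Fin m)).image (ez z)) (le_of_lt hp)
    have h2 : cnt ((univ : Finset (Fin m)).image (ez z)) p = (j : ℕ) := by
      rw [show p = ((ez z j : ℕ)) from (congrArg Fin.val hj).symm]
      exact cnt_image_sm (ez_strictMono hmono) j
    rw [h2] at h1
    show cnt ((univ : Finset (Fin m)).image (ez z))ᶜ p = (z j : ℕ)
    omega
  rw [hcnt]
  have hc := hcond j
  calc (d + m) * (z j : ℕ) = d * (z j : ℕ) + m * (z j : ℕ) := by ring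
    _ ≤ d * (z j : ℕ) + d * (j : ℕ) := by omega
    _ = d * p := by rw [← hjval]; ring

lemma Az_inj {z₁ z₂ : Fin m → Fin (d + 1)}
    (h1 : ∀ j k : Fin m, j ≤ k → (z₁ j : ℕ) ≤ (z₁ k : ℕ))
    (h2 : ∀ j k : Fin m, j ≤ k → (z₂ j : ℕ) ≤ (z₂ k : ℕ))
    (h : Az z₁ = Az z₂) : z₁ = z₂ := by
  have himg : (univ : Finset (Fin m)).image (ez z₁) = (univ : Finset (Fin m)).image (ez z₂) := by
    have := congrArg (fun s => sᶜ) h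
    simpa [Az, compl_compl] using this
  have hcard : ((univ : Finset (Fin m)).image (ez z₁)).card = m := by
    rw [card_image_of_injective _ (ez_strictMono h1).injective, card_univ, Fintype.card_fin]
  have e1 : ez z₁ = ⇑(((univ : Finset (Fin m)).image (ez z₁)).orderEmbOfFin hcard) :=
    Finset.orderEmbOfFin_unique hcard (fun x => mem_image_of_mem _ (mem_univ x))
      (ez_strictMono h1)
  have e2 : ez z₂ = ⇑(((univ : Finset (Fin m)).image (ez z₁)).orderEmbOfFin hcard) :=
    Finset.orderEmbOfFin_unique hcard
      (fun x => by rw [himg]; exact mem_image_of_mem _ (mem_univ x)) (ez_strictMono h2)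
  have he : ez z₁ = ez z₂ := e1.trans e2.symm
  funext j
  have := congrArg (fun f => (f j : Fin (d + m)).1) he
  simp only [ez] at this
  exact Fin.ext (by omega)

lemma card_Zf_eq_card_Dy (hm : 0 < m) (hgcd : Nat.Coprime (d + m) d) :
    (Zf d m).card = (Dy d m).card := by
  apply card_bij (fun z (_ : z ∈ Zf d m) => Az z)
  · intro z hz; exact Az_mem_Dy hgcd hm hz
  · intro z₁ hz₁ z₂ hz₂ h
    exact Az_inj (mem_filter.mp hz₁).2.1 (mem_filter.mp hz₂).2.1 h
  · intro B hB
    have hcardB : B.card = d := (mem_Dy.mp hB).1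
    have hEc : (Bᶜ).card = m := by
      rw [card_compl, hcardB, Fintype.card_fin]; omega
    set g := (Bᶜ).orderEmbOfFin hEc with hg
    have hgsm : StrictMono ⇑g := g.strictMono
    have himgEc : (univ : Finset (Fin m)).image ⇑g = Bᶜ := by
      ext x
      rw [mem_image]
      constructor
      · rintro ⟨j, -, rfl⟩; exact Finset.orderEmbOfFin_mem _ _ _
      · intro hx
        have : x ∈ Set.range ⇑g := by
          rw [hg, Finset.range_orderEmbOfFin]; exact hx
        obtain ⟨j, hj⟩ := this
        exact ⟨j, mem_univ _, hj⟩
    have hjle : ∀ j : Fin m, (j : ℕ) ≤ (g j : ℕ) := by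
      intro j
      have h0 : (0 : ℕ) < m := j.pos
      have := strictMono_gap hgsm (j : ℕ) ⟨0, h0⟩ j (by simp)
      omega
    have hgub : ∀ j : Fin m, (g j : ℕ) ≤ d + (j : ℕ) := by
      intro j
      have hjm : (j : ℕ) ≤ m - 1 := by have := j.isLt; omega
      have hmm : m - 1 < m := by have := j.pos; omega
      have := strictMono_gap hgsm (m - 1 - (j : ℕ)) j ⟨m - 1, hmm⟩ (by simp; omega)
      have h2 := (g ⟨m - 1, hmm⟩).isLt
      omega
    set z : Fin m → Fin (d + 1) := fun j => ⟨(g j : ℕ) - (j : ℕ), by have := hgub j; omega⟩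
      with hzdef
    have hez : ez z = ⇑g := by
      funext j
      apply Fin.ext
      show ((z j : ℕ)) + (j : ℕ) = (g j : ℕ)
      have := hjle j
      simp only [hzdef]
      omega
    have hcntB : ∀ j : Fin m, cnt B ((g j : ℕ)) = (g j : ℕ) - (j : ℕ) := by
      intro j
      have h1 := cnt_compl B (le_of_lt (g j).isLt)
      have h2 : cnt Bᶜ ((g j : ℕ)) = (j : ℕ) := by
        rw [← himgEc]
        exact cnt_image_sm hgsm j
      omega
    have hmono : ∀ j k : Fin m, j ≤ k → (z j : ℕ) ≤ (z k : ℕ) := by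
      intro j k hjk
      rw [Fin.le_def] at hjk
      have := strictMono_gap hgsm ((k : ℕ) - (j : ℕ)) j k (by omega)
      simp only [hzdef]
      omega
    have hcond : ∀ j : Fin m, m * (z j : ℕ) ≤ d * (j : ℕ) := by
      intro j
      simp only [hzdef]
      show m * ((g j : ℕ) - (j : ℕ)) ≤ d * (j : ℕ)
      by_cases hp0 : (g j : ℕ) = 0
      · have := hjle j
        rw [show (g j : ℕ) - (j : ℕ) = 0 by omega, Nat.mul_zero]
        exact Nat.zero_le _
      · have hstrict := (mem_Dy.mp hB).2 ((g j : ℕ)) (g j).isLt (by omega)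
        unfold fA at hstrict
        rw [sub_neg] at hstrict
        rw [hcntB j] at hstrict
        have hstrictN : (d + m) * ((g j : ℕ) - (j : ℕ)) < d * (g j : ℕ) := by
          exact_mod_cast hstrict
        have hje := hjle j
        zify [hje] at hstrictN ⊢
        nlinarith [hstrictN]
    refine ⟨z, mem_filter.mpr ⟨mem_univ _, hmono, hcond⟩, ?_⟩
    rw [Az, hez, himgEc, compl_compl]

section Matroid

def Dmat (d m : ℕ) (z : Fin m → Fin (d + 1)) : Matrix (Fin d) (Fin m) ℝ :=
  fun i j => if (i : ℕ) + 1 ≤ (z j : ℕ) then 0 else 1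

def embd (d m : ℕ) (i : Fin d) : Fin (d + m) := ⟨(i : ℕ), by have := i.isLt; omega⟩

def cJ (d m : ℕ) (j : Fin m) : Fin (d + m) := ⟨d + (j : ℕ), by have := j.isLt; omega⟩

lemma embd_inj : Function.Injective (embd d m) := by
  intro a b h
  have h2 : ((embd d m a : Fin (d + m)) : ℕ) = ((embd d m b : Fin (d + m)) : ℕ) :=
    congrArg Fin.val h
  exact Fin.ext h2

lemma phi_emb (D : Matrix (Fin d) (Fin m) ℝ) (i i' : Fin d) :
    phiMat D i (embd d m i') = if (i' : ℕ) = (i : ℕ) then 1 else 0 := by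
  show (if h : ((embd d m i' : Fin (d + m)) : ℕ) < d then
      (if ((embd d m i' : Fin (d + m)) : ℕ) = (i : ℕ) then (1 : ℝ) else 0) else _) = _
  rw [dif_pos (show ((embd d m i' : Fin (d + m)) : ℕ) < d from i'.isLt)]
  rfl

lemma phi_cJ_zero (z : Fin m → Fin (d + 1)) (i : Fin d) (j : Fin m)
    (h : d ≤ (i : ℕ) + (z j : ℕ)) : phiMat (Dmat d m z) i (cJ d m j) = 0 := by
  have hnot : ¬ ((cJ d m j : Fin (d + m)) : ℕ) < d := by
    show ¬ d + (j : ℕ) < d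
    omega
  show (if hc : ((cJ d m j : Fin (d + m)) : ℕ) < d then
      (if ((cJ d m j : Fin (d + m)) : ℕ) = (i : ℕ) then (1 : ℝ) else 0)
    else (-1 : ℝ) ^ (d - 1 - (i : ℕ)) *
      Dmat d m z ⟨d - 1 - (i : ℕ), by have := i.isLt; omega⟩
        ⟨((cJ d m j : Fin (d + m)) : ℕ) - d, by have := (cJ d m j).isLt; omega⟩) = 0
  rw [dif_neg hnot]
  have hD : Dmat d m z ⟨d - 1 - (i : ℕ), by have := i.isLt; omega⟩
      ⟨((cJ d m j : Fin (d + m)) : ℕ) - d, by have := (cJ d m j).isLt; omega⟩ = 0 := by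
    have hjeq : (⟨((cJ d m j : Fin (d + m)) : ℕ) - d, by have := (cJ d m j).isLt; omega⟩ : Fin m)
        = j := by
      apply Fin.ext
      show (d + (j : ℕ)) - d = (j : ℕ)
      omega
    rw [hjeq]
    show (if d - 1 - (i : ℕ) + 1 ≤ (z j : ℕ) then (0:ℝ) else 1) = 0
    rw [if_pos (show d - 1 - (i : ℕ) + 1 ≤ (z j : ℕ) by have := i.isLt; omega)]
  rw [hD, mul_zero]

lemma phi_cJ_ne (z : Fin m → Fin (d + 1)) (i : Fin d) (j : Fin m)
    (h : (i : ℕ) + (z j : ℕ) < d) : phiMat (Dmat d m z) i (cJ d m j) ≠ 0 := by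
  have hnot : ¬ ((cJ d m j : Fin (d + m)) : ℕ) < d := by
    show ¬ d + (j : ℕ) < d
    omega
  show (if hc : ((cJ d m j : Fin (d + m)) : ℕ) < d then
      (if ((cJ d m j : Fin (d + m)) : ℕ) = (i : ℕ) then (1 : ℝ) else 0)
    else (-1 : ℝ) ^ (d - 1 - (i : ℕ)) *
      Dmat d m z ⟨d - 1 - (i : ℕ), by have := i.isLt; omega⟩
        ⟨((cJ d m j : Fin (d + m)) : ℕ) - d, by have := (cJ d m j).isLt; omega⟩) ≠ 0
  rw [dif_neg hnot]
  have hD : Dmat d m z ⟨d - 1 - (i : ℕ), by have := i.isLt; omega⟩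
      ⟨((cJ d m j : Fin (d + m)) : ℕ) - d, by have := (cJ d m j).isLt; omega⟩ = 1 := by
    have hjeq : (⟨((cJ d m j : Fin (d + m)) : ℕ) - d, by have := (cJ d m j).isLt; omega⟩ : Fin m)
        = j := by
      apply Fin.ext
      show (d + (j : ℕ)) - d = (j : ℕ)
      omega
    rw [hjeq]
    show (if d - 1 - (i : ℕ) + 1 ≤ (z j : ℕ) then (0:ℝ) else 1) = 1
    rw [if_neg (show ¬ (d - 1 - (i : ℕ) + 1 ≤ (z j : ℕ)) by have := i.isLt; omega)]
  rw [hD, mul_one]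
  exact pow_ne_zero _ (by norm_num)

def Bset (d m : ℕ) (k : Fin d) (j : Fin m) : Finset (Fin (d + m)) :=
  insert (cJ d m j) (((univ : Finset (Fin d)).image (embd d m)).erase (embd d m k))

lemma cJ_notMem (k : Fin d) (j : Fin m) :
    cJ d m j ∉ ((univ : Finset (Fin d)).image (embd d m)).erase (embd d m k) := by
  intro h
  obtain ⟨i, -, hi⟩ := mem_image.mp (mem_of_mem_erase h)
  have := congrArg Fin.val hi
  have h2 := i.isLt
  simp only [embd, cJ] at this
  omega

lemma card_Bset (hd : 0 < d) (k : Fin d) (j : Fin m) : (Bset d m k j).card = d := by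
  rw [Bset, card_insert_of_notMem (cJ_notMem k j),
    card_erase_of_mem (mem_image_of_mem _ (mem_univ k)),
    card_image_of_injective _ embd_inj, card_univ, Fintype.card_fin]
  omega

lemma sum_Bset (z : Fin m → Fin (d + 1)) (k : Fin d) (j : Fin m) (G : Fin (d + m) → ℝ)
    (r : Fin d) :
    ∑ x ∈ Bset d m k j, G x * phiMat (Dmat d m z) r x
      = G (cJ d m j) * phiMat (Dmat d m z) r (cJ d m j)
        + (if r ≠ k then G (embd d m r) else 0) := by
  rw [Bset, sum_insert (cJ_notMem k j)]
  congr 1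
  rw [← image_erase embd_inj, sum_image (fun a _ b _ h => embd_inj h)]
  have hcongr : ∀ i ∈ (univ : Finset (Fin d)).erase k,
      G (embd d m i) * phiMat (Dmat d m z) r (embd d m i)
        = if i = r then G (embd d m i) else 0 := by
    intro i _
    rw [phi_emb]
    by_cases h : i = r
    · subst h; rw [if_pos rfl, if_pos rfl, mul_one]
    · rw [if_neg (fun hv => h (Fin.ext hv)), if_neg h, mul_zero]
  rw [sum_congr rfl hcongr, sum_ite_eq' ((univ : Finset (Fin d)).erase k) r
    (fun i => G (embd d m i))]
  simp only [mem_erase, mem_univ, and_true]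

lemma key (hd : 0 < d) (z : Fin m → Fin (d + 1)) (k : Fin d) (j : Fin m) :
    IsBasisOf (phiMat (Dmat d m z)) (Bset d m k j) ↔ (k : ℕ) + (z j : ℕ) < d := by
  classical
  constructor
  · rintro ⟨-, hLI⟩
    by_contra hkz
    push_neg at hkz
    set G : Fin (d + m) → ℝ := fun x =>
      if h : (x : ℕ) < d then -(phiMat (Dmat d m z) ⟨(x : ℕ), h⟩ (cJ d m j)) else 1 with hGdef
    have hsum0 : ∑ b : (Bset d m k j : Finset (Fin (d + m))),
        G b.1 • (phiMat (Dmat d m z)).transpose b.1 = 0 := by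
      funext r
      rw [Finset.sum_apply]
      have e1 : ∀ b : (Bset d m k j : Finset (Fin (d + m))),
          (G b.1 • (phiMat (Dmat d m z)).transpose b.1) r
            = G b.1 * phiMat (Dmat d m z) r b.1 := by
        intro b
        simp [Matrix.transpose_apply]
      rw [Finset.sum_congr rfl (fun b _ => e1 b),
        Finset.sum_coe_sort (Bset d m k j) (fun x => G x * phiMat (Dmat d m z) r x),
        sum_Bset z k j G r]
      have hGc : G (cJ d m j) = 1 := by
        rw [hGdef]
        exact dif_neg (by show ¬ d + (j : ℕ) < d; omega)
      have hGe : G (embd d m r) = -(phiMat (Dmat d m z) r (cJ d m j)) := by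
        rw [hGdef]
        have hr : ((embd d m r : Fin (d + m)) : ℕ) < d := r.isLt
        exact dif_pos hr
      rw [hGc, hGe, one_mul]
      by_cases h : r = k
      · subst h
        rw [if_neg (by simp), phi_cJ_zero z r j (by omega)]
        simp
      · rw [if_pos h]
        simp
    have hall := Fintype.linearIndependent_iff.mp hLI (fun b => G b.1) hsum0
    have hmem : cJ d m j ∈ Bset d m k j := mem_insert_self _ _
    have := hall ⟨cJ d m j, hmem⟩
    rw [hGdef] at this
    simp only [dif_neg (show ¬ ((cJ d m j : Fin (d + m)) : ℕ) < d by
      show ¬ d + (j : ℕ) < d; omega)] at this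
    exact one_ne_zero this
  · intro hkz
    refine ⟨card_Bset hd k j, ?_⟩
    rw [Fintype.linearIndependent_iff]
    intro g hg b
    set G : Fin (d + m) → ℝ := fun x =>
      if h : x ∈ Bset d m k j then g ⟨x, h⟩ else 0 with hGdef
    have hG : ∀ b : (Bset d m k j : Finset (Fin (d + m))), g b = G b.1 := by
      intro b
      rw [hGdef]
      simp only [b.2, dif_pos]
    have hrow : ∀ r : Fin d,
        G (cJ d m j) * phiMat (Dmat d m z) r (cJ d m j)
          + (if r ≠ k then G (embd d m r) else 0) = 0 := by
      intro r
      rw [← sum_Bset z k j G r,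
        ← Finset.sum_coe_sort (Bset d m k j) (fun x => G x * phiMat (Dmat d m z) r x)]
      have h0 := congrFun hg r
      rw [Finset.sum_apply, Pi.zero_apply] at h0
      rw [← h0]
      apply Finset.sum_congr rfl
      intro b _
      rw [← hG b]
      simp [Matrix.transpose_apply]
    have hGc : G (cJ d m j) = 0 := by
      have h1 := hrow k
      rw [if_neg (by simp)] at h1
      have h2 := phi_cJ_ne z k j hkz
      have := mul_eq_zero.mp (by linarith : G (cJ d m j) * phiMat (Dmat d m z) k (cJ d m j) = 0)
      tauto
    rw [hG b]
    rcases mem_insert.mp b.2 with hb | hb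
    · rw [hb]; exact hGc
    · obtain ⟨i, -, hi⟩ := mem_image.mp (mem_of_mem_erase hb)
      have hik : i ≠ k := by
        intro h
        subst h
        exact (ne_of_mem_erase hb) hi.symm
      have h1 := hrow i
      rw [if_pos hik, hGc, zero_mul, zero_add] at h1
      rw [← hi]
      exact h1

end Matroid
def Mset (d m : ℕ) (z : Fin m → Fin (d + 1)) : Set (Finset (Fin (d + m))) :=
  {B | IsBasisOf (phiMat (Dmat d m z)) B}

lemma Mset_inj (hd : 0 < d) : Function.Injective (Mset d m) := by
  have main : ∀ (w w' : Fin m → Fin (d + 1)) (j : Fin m), Mset d m w = Mset d m w' →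
      (w j : ℕ) < (w' j : ℕ) → False := by
    intro w w' j hM hlt
    have hwj : (w j : ℕ) ≤ d - 1 := by have := (w' j).isLt; omega
    set k : Fin d := ⟨d - 1 - (w j : ℕ), by omega⟩ with hk
    have h1 : (k : ℕ) + (w j : ℕ) < d := by simp only [hk]; omega
    have h2 : ¬ ((k : ℕ) + (w' j : ℕ) < d) := by
      simp only [hk]
      have := (w' j).isLt
      omega
    have hmem : Bset d m k j ∈ Mset d m w := (key hd w k j).mpr h1
    rw [hM] at hmem
    exact h2 ((key hd w' k j).mp hmem)
  intro z z' h
  funext j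
  rcases lt_trichotomy ((z j : ℕ)) ((z' j : ℕ)) with hlt | heq | hgt
  · exact absurd (main z z' j h hlt) (fun f => f)
  · exact Fin.ext heq
  · exact absurd (main z' z j h.symm hgt) (fun f => f)

lemma set_eq :
    {𝓑 : Set (Finset (Fin (d + m))) | ∃ D : Matrix (Fin d) (Fin m) ℝ,
        IsRDM d m D ∧ 𝓑 = {B | IsBasisOf (phiMat D) B}}
      = (Mset d m) '' (↑(Zf d m) : Set (Fin m → Fin (d + 1))) := by
  ext 𝓑
  simp only [Set.mem_setOf_eq, Set.mem_image, Finset.mem_coe]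
  constructor
  · rintro ⟨D, ⟨zn, hmono, hle, hcond, hentry⟩, rfl⟩
    refine ⟨fun j => ⟨zn j, by have := hle j; omega⟩, ?_, ?_⟩
    · rw [Zf, mem_filter]
      exact ⟨mem_univ _, fun j k hjk => hmono hjk, fun j => hcond j⟩
    · have hD : D = Dmat d m (fun j => ⟨zn j, by have := hle j; omega⟩) := by
        funext i jj
        rw [hentry i jj]
        rfl
      rw [Mset, hD]
  · rintro ⟨z, hz, rfl⟩
    obtain ⟨-, hmono, hcond⟩ := mem_filter.mp hz
    refine ⟨Dmat d m z, ⟨fun j => (z j : ℕ), fun a b hab => hmono a b hab,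
      fun j => by show (z j : ℕ) ≤ d; have := (z j).isLt; omega, fun j => hcond j, fun i j => rfl⟩, rfl⟩

end RDPAux

/-- Corollary 4.8: when `gcd(d, m) = 1`, the number of rank-`d` rational Dyck
positroids on `{1, …, d+m}` is the rational Catalan number
`(1/(d+m)) * C(d+m, d)` (stated multiplicatively to avoid division). -/
theorem card_rationalDyckPositroids (d m : ℕ) (hd : 0 < d) (hm : 0 < m)
    (hgcd : Nat.gcd d m = 1) :
    (d + m) * {𝓑 : Set (Finset (Fin (d + m))) | ∃ D : Matrix (Fin d) (Fin m) ℝ,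
        IsRDM d m D ∧ 𝓑 = {B | IsBasisOf (phiMat D) B}}.ncard
      = (d + m).choose d := by
  haveI : NeZero (d + m) := ⟨by omega⟩
  have hco : Nat.Coprime (d + m) d := by
    unfold Nat.Coprime
    rw [Nat.gcd_self_add_left, Nat.gcd_comm]
    exact hgcd
  rw [RDPAux.set_eq, Set.ncard_image_of_injective _ (RDPAux.Mset_inj hd),
    Set.ncard_coe_finset, RDPAux.card_Zf_eq_card_Dy hm hco, RDPAux.card_Dy hd hm hco]
end
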